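/- Let s, s′ ∈ B_n and let s″ ∈ S be such that the concatenations s + s″ and s′ + s″ belong to B. Then τ(s + s″) − τ(s′ + s″) = τ(s) − τ(s′). -/

import Mathlib

/-- The `j`-th entry (1-indexed) of a finite sequence of positive naturals,
viewed as a natural number. Only used for `1 ≤ j ≤ s.length`. -/
def nthSeq (s : List ℕ+) (j : ℕ) : ℕ := ↑(s.getD (j - 1) 1)

/-- The linear order `⪯` on finite sequences of positive natural numbers:
`s ⪯ t` iff either (a) there is an index `j ≤ min (ℓ s) (ℓ t)` which is the first index where
`s` and `t` differ, and there `s j < t j`, or (b) `ℓ s ≤ ℓ t` and `t` extends `s`. -/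
def sle (s t : List ℕ+) : Prop :=
  (∃ j, 1 ≤ j ∧ j ≤ min s.length t.length ∧
     (∀ i, 1 ≤ i → i < j → nthSeq s i = nthSeq t i) ∧ nthSeq s j < nthSeq t j) ∨
  (s.length ≤ t.length ∧ ∀ j, 1 ≤ j → j ≤ s.length → nthSeq s j = nthSeq t j)

/-- The strict version `≺` of the order `⪯`. -/
def slt (s t : List ℕ+) : Prop := sle s t ∧ s ≠ t

/-- The set `B` of nonempty sequences `s` with `s i ≤ i` for all `1 ≤ i ≤ ℓ s`. -/
def BSet : Set (List ℕ+) := {s | 1 ≤ s.length ∧ ∀ i, 1 ≤ i → i ≤ s.length → nthSeq s i ≤ i}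

/-- `λ n = 1 / (2^n n!)`. -/
noncomputable def lam (n : ℕ) : ℝ := 1 / ((2 : ℝ) ^ n * (n.factorial : ℝ))

/-- `τ s = Σ_{t ∈ B, t ≺ s} λ (ℓ t)`. -/
noncomputable def tau (s : List ℕ+) : ℝ :=
  ∑' t : {t : List ℕ+ // t ∈ BSet ∧ slt t s}, lam t.1.length

/-!
The relation `≺` is the lexicographic order on lists. For `v ∈ B_n`, the elements `t ∈ B` with
`v ⪯ t ≺ v ++ w` are exactly the `v ++ u` with `u ≺ w`, and whether `v ++ u` lies in `B` depends
on `u` and `n` only. Hence `τ (v ++ w) - τ v = Σ λ (n + ℓ u)`, summed over such `u`, does not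
depend on `v ∈ B_n`. All sums converge since `|B_k| ≤ k!`, so that `λ` summed over `B_k` is at
most `2⁻ᵏ`.
-/

namespace List

variable {α : Type*} [LinearOrder α]

theorem self_le_append (v w : List α) : v ≤ v ++ w := by
  rcases w with _ | ⟨a, w⟩
  · rw [append_nil]
  · simpa using (append_left_lt (l₁ := v) (Lex.nil : Lex (· < ·) [] (a :: w))).le

theorem exists_eq_append_of_le_of_lt_append :
    ∀ {v t w : List α}, v ≤ t → t < v ++ w → ∃ u, t = v ++ u ∧ u < w
  | [], t, _, _, htw => ⟨t, rfl, htw⟩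
  | a :: v, [], _, hvt, _ => absurd (Lex.nil : Lex (· < ·) [] (a :: v)) (not_lt.2 hvt)
  | a :: v, b :: t, w, hvt, htw => by
    rw [← not_lt, cons_lt_cons_iff, not_or, not_and] at hvt
    rcases cons_lt_cons_iff.1 htw with hba | ⟨rfl, htw'⟩
    · exact absurd hba hvt.1
    · obtain ⟨u, rfl, hu⟩ := exists_eq_append_of_le_of_lt_append (not_lt.1 (hvt.2 rfl)) htw'
      exact ⟨u, rfl, hu⟩

theorem Ico_self_append (v w : List α) : Set.Ico v (v ++ w) = (v ++ ·) '' Set.Iio w := by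
  ext t
  constructor
  · rintro ⟨hvt, htw⟩
    obtain ⟨u, rfl, hu⟩ := exists_eq_append_of_le_of_lt_append hvt htw
    exact ⟨u, hu, rfl⟩
  · rintro ⟨u, hu, rfl⟩
    exact ⟨self_le_append v u, append_left_lt hu⟩

end List

theorem nthSeq_succ {s : List ℕ+} {i : ℕ} (h : i < s.length) : nthSeq s (i + 1) = s[i] := by
  simp [nthSeq, h]

theorem nthSeq_firstDiff_iff (s t : List ℕ+) :
    (∃ j, 1 ≤ j ∧ j ≤ min s.length t.length ∧
      (∀ i, 1 ≤ i → i < j → nthSeq s i = nthSeq t i) ∧ nthSeq s j < nthSeq t j) ↔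
    ∃ (i : ℕ) (h₁ : i < s.length) (h₂ : i < t.length),
      (∀ j (hj : j < i), s[j] = t[j]) ∧ s[i] < t[i] := by
  constructor
  · rintro ⟨j, hj, hjst, heq, hlt⟩
    obtain ⟨i, rfl⟩ : ∃ i, j = i + 1 := ⟨j - 1, by omega⟩
    have h₁ : i < s.length := by omega
    have h₂ : i < t.length := by omega
    refine ⟨i, h₁, h₂, fun k hk => ?_, ?_⟩
    · have := heq (k + 1) (by omega) (by omega)
      rwa [nthSeq_succ (by omega), nthSeq_succ (by omega), PNat.coe_inj] at this
    · rwa [nthSeq_succ h₁, nthSeq_succ h₂, PNat.coe_lt_coe] at hlt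
  · rintro ⟨i, h₁, h₂, heq, hlt⟩
    refine ⟨i + 1, by omega, by omega, fun k hk hki => ?_, ?_⟩
    · obtain ⟨k, rfl⟩ : ∃ k', k = k' + 1 := ⟨k - 1, by omega⟩
      rw [nthSeq_succ (by omega), nthSeq_succ (by omega), heq k (by omega)]
    · rwa [nthSeq_succ h₁, nthSeq_succ h₂, PNat.coe_lt_coe]

theorem nthSeq_prefix_iff (s t : List ℕ+) :
    (s.length ≤ t.length ∧ ∀ j, 1 ≤ j → j ≤ s.length → nthSeq s j = nthSeq t j) ↔ s <+: t := by
  rw [List.prefix_iff_getElem]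
  refine ⟨fun ⟨hst, heq⟩ => ⟨hst, fun i hi => ?_⟩, fun ⟨hst, heq⟩ => ⟨hst, fun j hj hjs => ?_⟩⟩
  · have := heq (i + 1) (by omega) (by omega)
    rwa [nthSeq_succ hi, nthSeq_succ (by omega), PNat.coe_inj] at this
  · obtain ⟨i, rfl⟩ : ∃ i, j = i + 1 := ⟨j - 1, by omega⟩
    rw [nthSeq_succ (by omega), nthSeq_succ (by omega), heq i (by omega)]

theorem slt_iff_lt (s t : List ℕ+) : slt s t ↔ s < t := by
  rw [slt, sle, nthSeq_firstDiff_iff, nthSeq_prefix_iff, List.lt_iff_exists, ← List.prefix_iff_eq_take]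
  constructor
  · rintro ⟨hdiff | hpre, hne⟩
    · exact Or.inr hdiff
    · exact Or.inl ⟨hpre, lt_of_le_of_ne hpre.length_le fun h => hne (hpre.eq_of_length h)⟩
  · rintro (⟨hpre, hlen⟩ | hdiff)
    · exact ⟨Or.inr hpre, fun h => hlen.ne (congrArg List.length h)⟩
    · refine ⟨Or.inl hdiff, ?_⟩
      rintro rfl
      obtain ⟨i, _, _, _, hlt⟩ := hdiff
      exact lt_irrefl _ hlt

def BLen (k : ℕ) : Set (List ℕ+) := {t | t ∈ BSet ∧ t.length = k}

theorem getElem_le_of_mem_BLen {k : ℕ} {t : List ℕ+} (ht : t ∈ BLen k) (i : Fin k) :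
    (t[i]'(by rw [ht.2]; exact i.2) : ℕ) ≤ i + 1 := by
  have := ht.1.2 (i + 1) (by omega) (by have := ht.2; omega)
  rwa [nthSeq_succ] at this

/-- Recording `t[i] - 1 ∈ {0, …, i}` for each `i` encodes `B_k` into a set with `k!` elements. -/
def BLen.code {k : ℕ} (t : BLen k) (i : Fin k) : Fin (i + 1) :=
  ⟨(t.1[i]'(by rw [t.2.2]; exact i.2)).natPred, by
    have := getElem_le_of_mem_BLen t.2 i
    simp only [PNat.natPred]
    omega⟩

theorem BLen.code_injective (k : ℕ) : Function.Injective (BLen.code (k := k)) := by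
  rintro ⟨t, ht⟩ ⟨t', ht'⟩ h
  refine Subtype.ext (List.ext_getElem (ht.2.trans ht'.2.symm) fun i hi hi' => ?_)
  have := congrArg Fin.val (congrFun h ⟨i, ht.2 ▸ hi⟩)
  exact PNat.natPred_inj.1 this

instance (k : ℕ) : Finite (BLen k) := Finite.of_injective _ (BLen.code_injective k)

theorem card_BLen_le (k : ℕ) : Nat.card (BLen k) ≤ k.factorial := by
  calc Nat.card (BLen k) ≤ Nat.card (∀ i : Fin k, Fin (i + 1)) :=
        Nat.card_le_card_of_injective _ (BLen.code_injective k)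
    _ = k.factorial := by
        simp [Nat.card_eq_fintype_card, Fintype.card_pi,
          Fin.prod_univ_eq_prod_range (fun i => i + 1), Finset.prod_range_add_one_eq_factorial]

theorem lam_nonneg (k : ℕ) : 0 ≤ lam k := by
  unfold lam
  positivity

theorem factorial_mul_lam (k : ℕ) : k.factorial * lam k = (1 / 2) ^ k := by
  rw [lam, div_pow, one_pow]
  field_simp

theorem summable_lam_length_BSet : Summable fun t : BSet => lam t.1.length := by
  let e : BSet ≃ Σ k, BLen k :=
    { toFun := fun t => ⟨t.1.length, t.1, t.2, rfl⟩
      invFun := fun p => ⟨p.2.1, p.2.2.1⟩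
      left_inv := fun _ => rfl
      right_inv := by rintro ⟨k, t, ht, rfl⟩; rfl }
  suffices hsum : Summable fun p : Σ k, BLen k => lam p.1 from
    (e.summable_iff (f := fun p : Σ k, BLen k => lam p.1)).2 hsum
  rw [summable_sigma_of_nonneg fun _ => lam_nonneg _]
  refine ⟨fun k => Summable.of_finite, ?_⟩
  refine (summable_geometric_of_lt_one (r := 1 / 2) (by norm_num) (by norm_num)).of_nonneg_of_le
    (fun k => tsum_nonneg fun _ => lam_nonneg k) fun k => ?_
  calc ∑' _ : BLen k, lam k = Nat.card (BLen k) * lam k := by rw [tsum_const, nsmul_eq_mul]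
    _ ≤ k.factorial * lam k := by gcongr; exacts [lam_nonneg k, card_BLen_le k]
    _ = (1 / 2) ^ k := factorial_mul_lam k

theorem summable_lam_length_of_subset_BSet {A : Set (List ℕ+)} (hA : A ⊆ BSet) :
    Summable fun t : A => lam t.1.length :=
  summable_lam_length_BSet.comp_injective (i := Set.inclusion hA) (Set.inclusion_injective hA)

theorem tau_eq_tsum_Iio (b : List ℕ+) : tau b = ∑' t : ↥(BSet ∩ Set.Iio b), lam t.1.length :=
  tsum_congr_set_coe (fun t : List ℕ+ => lam t.length)
    (Set.ext fun t => and_congr_right fun _ => slt_iff_lt t b)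

theorem tau_eq_add_tsum_Ico {a b : List ℕ+} (hab : a ≤ b) :
    tau b = tau a + ∑' t : ↥(BSet ∩ Set.Ico a b), lam t.1.length := by
  have hdisj : Disjoint (BSet ∩ Set.Iio a) (BSet ∩ Set.Ico a b) :=
    (Set.Iio_disjoint_Ici le_rfl).mono Set.inter_subset_right
      (Set.inter_subset_right.trans Set.Ico_subset_Ici_self)
  rw [tau_eq_tsum_Iio, tau_eq_tsum_Iio, ← Set.Iio_union_Ico_eq_Iio hab,
    Set.inter_union_distrib_left]
  exact Summable.tsum_union_disjoint (f := fun t : List ℕ+ => lam t.length) hdisj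
    (summable_lam_length_of_subset_BSet Set.inter_subset_left)
    (summable_lam_length_of_subset_BSet Set.inter_subset_left)

def BTail (n : ℕ) : Set (List ℕ+) := {u | ∀ i, 1 ≤ i → i ≤ u.length → nthSeq u i ≤ n + i}

theorem nthSeq_append_left {s : List ℕ+} (u : List ℕ+) {j : ℕ} (hj : 1 ≤ j) (hjs : j ≤ s.length) :
    nthSeq (s ++ u) j = nthSeq s j := by
  unfold nthSeq
  rw [List.getD_append _ _ _ _ (by omega)]

theorem nthSeq_append_right (s u : List ℕ+) {i : ℕ} (hi : 1 ≤ i) :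
    nthSeq (s ++ u) (s.length + i) = nthSeq u i := by
  unfold nthSeq
  rw [List.getD_append_right _ _ _ _ (by omega)]
  congr 2
  omega

theorem append_mem_BSet_iff {s : List ℕ+} (hs : s ∈ BSet) (u : List ℕ+) :
    s ++ u ∈ BSet ↔ u ∈ BTail s.length := by
  obtain ⟨hs1, hs2⟩ := hs
  constructor
  · rintro ⟨-, h⟩ i hi hiu
    have := h (s.length + i) (by omega) (by rw [List.length_append]; omega)
    rwa [nthSeq_append_right s u hi] at this
  · intro h
    refine ⟨by rw [List.length_append]; omega, fun j hj hju => ?_⟩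
    rw [List.length_append] at hju
    by_cases hjs : j ≤ s.length
    · rw [nthSeq_append_left u hj hjs]
      exact hs2 j hj hjs
    · obtain ⟨i, rfl⟩ : ∃ i, j = s.length + i := ⟨j - s.length, by omega⟩
      rw [nthSeq_append_right s u (by omega)]
      exact h i (by omega) (by omega)

theorem BSet_inter_Ico_self_append {v : List ℕ+} (hv : v ∈ BSet) (w : List ℕ+) :
    BSet ∩ Set.Ico v (v ++ w) = (v ++ ·) '' (Set.Iio w ∩ BTail v.length) := by
  have hpre : (v ++ ·) ⁻¹' BSet = BTail v.length := Set.ext (append_mem_BSet_iff hv)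
  rw [Set.inter_comm, List.Ico_self_append, ← hpre, Set.image_inter_preimage]

theorem tau_append {v : List ℕ+} (hv : v ∈ BSet) (w : List ℕ+) :
    tau (v ++ w) = tau v + ∑' u : ↥(Set.Iio w ∩ BTail v.length), lam (v.length + u.1.length) := by
  rw [tau_eq_add_tsum_Ico (List.self_le_append v w), BSet_inter_Ico_self_append hv,
    tsum_image (fun t : List ℕ+ => lam t.length) (List.append_right_injective v).injOn]
  simp only [List.length_append]

theorem tau_append_sub_eq_general (n : ℕ) (s s' : List ℕ+) (hs : s ∈ BSet) (hs' : s' ∈ BSet)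
    (hlen : s.length = n) (hlen' : s'.length = n) (s'' : List ℕ+) :
    tau (s ++ s'') - tau (s' ++ s'') = tau s - tau s' := by
  rw [tau_append hs, tau_append hs', hlen, hlen']
  ring

/-- Let `s, s' ∈ B_n` and let `s''` be a finite sequence such that the concatenations
`s + s''` and `s' + s''` belong to `B`. Then
`τ (s + s'') - τ (s' + s'') = τ s - τ s'`. -/
theorem tau_append_sub_eq (n : ℕ) (s s' : List ℕ+) (hs : s ∈ BSet) (hs' : s' ∈ BSet)
    (hlen : s.length = n) (hlen' : s'.length = n) (s'' : List ℕ+)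
    (h1 : s ++ s'' ∈ BSet) (h2 : s' ++ s'' ∈ BSet) :
    tau (s ++ s'') - tau (s' ++ s'') = tau s - tau s' :=
  tau_append_sub_eq_general n s s' hs hs' hlen hlen' s''
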